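/- arXiv:1210.6538 — 2 statements merged into one kernel-verified Lean document; each statement's English description precedes it below -/
import Mathlib

section
/- If every function computed by A has a computable trace bounded by a computable bound h₁, and every function computed by B has an A-computable trace bounded by a bound h₂ ≤_T A, and every A-computable function is dominated by a computable function, then every function computed by B has a computable trace bounded by the pointwise product h₁ · h̃₂ for some computable function h̃₂ dominating h₂. In particular, if A is computably traceable and B is computably traceable relative to A, then B is computably traceable. -/
/-- `OracleRecursiveIn O f` means the partial function `f : ℕ →. ℕ` is partial recursive
relative to the oracle `O : ℕ →. ℕ`. -/
inductive OracleRecursiveIn (O : ℕ →. ℕ) : (ℕ →. ℕ) → Prop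
  | oracle : OracleRecursiveIn O O
  | zero : OracleRecursiveIn O (pure 0)
  | succ : OracleRecursiveIn O Nat.succ
  | left : OracleRecursiveIn O fun n => (Nat.unpair n).1
  | right : OracleRecursiveIn O fun n => (Nat.unpair n).2
  | pair {f g : ℕ →. ℕ} : OracleRecursiveIn O f → OracleRecursiveIn O g →
      OracleRecursiveIn O fun n => Nat.pair <$> f n <*> g n
  | comp {f g : ℕ →. ℕ} : OracleRecursiveIn O f → OracleRecursiveIn O g →
      OracleRecursiveIn O fun n => g n >>= f
  | prec {f g : ℕ →. ℕ} : OracleRecursiveIn O f → OracleRecursiveIn O g →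
      OracleRecursiveIn O (Nat.unpaired fun a n =>
        n.rec (f a) fun y IH => do let i ← IH; g (Nat.pair a (Nat.pair y i)))
  | rfind {f : ℕ →. ℕ} : OracleRecursiveIn O f →
      OracleRecursiveIn O fun a => Nat.rfind fun n => (fun m => m = 0) <$> f (Nat.pair a n)

/-- Turing reducibility on total functions in Baire space. -/
def TuringLE (f g : ℕ → ℕ) : Prop := OracleRecursiveIn (↑g) (↑f)

/-- Turing equivalence. -/
def TuringEquiv (f g : ℕ → ℕ) : Prop := TuringLE f g ∧ TuringLE g f

/-- The join `f ⊕ g` of two elements of Baire space. -/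
def fjoin (f g : ℕ → ℕ) : ℕ → ℕ := fun n => if n % 2 = 0 then f (n / 2) else g (n / 2)

/-- A trace (with all sections finite) traces `g` if `g k ∈ T k` for all `k`. -/
def Traces (T : ℕ → Finset ℕ) (g : ℕ → ℕ) : Prop := ∀ k, g k ∈ T k

/-- A bound: a non-decreasing function with infinite (i.e. unbounded) range. -/
def IsBound (h : ℕ → ℕ) : Prop := Monotone h ∧ ∀ n, ∃ k, n ≤ h k

/-- `h` is a bound for the trace `T`. -/
def BoundFor (h : ℕ → ℕ) (T : ℕ → Finset ℕ) : Prop := ∀ k, (T k).card ≤ h k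

/-- A total function `f` is computable relative to the oracle `O`. -/
def FunRecIn (O : ℕ →. ℕ) (f : ℕ → ℕ) : Prop := OracleRecursiveIn O ↑f

/-- A trace is computable in the oracle `O` when the function giving (canonical indices
of) its sections is. -/
def TraceRecIn (O : ℕ →. ℕ) (T : ℕ → Finset ℕ) : Prop :=
  FunRecIn O fun k => Encodable.encode (T k)

/-- `f` is computably traceable: there is a single computable bound `h` such that every
total `g ≤_T f` is traced by a computable trace bounded by `h`. -/
def CompTraceable (f : ℕ → ℕ) : Prop :=
  ∃ h : ℕ → ℕ, Computable h ∧ IsBound h ∧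
    ∀ g : ℕ → ℕ, TuringLE g f → ∃ T : ℕ → Finset ℕ, Computable T ∧ Traces T g ∧ BoundFor h T

/-- `f` is computably traceable relative to `A`. -/
def CompTraceableIn (A f : ℕ → ℕ) : Prop :=
  ∃ h : ℕ → ℕ, TuringLE h A ∧ IsBound h ∧
    ∀ g : ℕ → ℕ, TuringLE g f → ∃ T : ℕ → Finset ℕ, TraceRecIn ↑A T ∧ Traces T g ∧ BoundFor h T

/-- `f` is hyperimmune-free: every function it computes is dominated by a computable
function. -/
def HIF (f : ℕ → ℕ) : Prop :=
  ∀ g : ℕ → ℕ, TuringLE g f → ∃ g' : ℕ → ℕ, Computable g' ∧ ∀ n, g n ≤ g' n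

/-!
Let `S` be an `A`-computable trace of a function `g ≤_T B`, with `|S k| ≤ h₂ k ≤ d k` for a
computable `d`. The codes `k ↦ encode (S k)` form an `A`-computable function, so by the
traceability of `A` they lie in a computable trace `U` with `|U k| ≤ h₁ k`. The union of those
sets coded in `U k` that have at most `d k` elements contains `S k ∋ g k`, is computable from
`k`, and has at most `h₁ k · d k` elements. When `A` is computably traceable it is
hyperimmune-free (the sum of the elements of a computable trace dominates the traced function),
which supplies `d`.
-/
open Encodable Denumerable

namespace Denumerable

theorem foldl_raise' : ∀ (l r : List ℕ) (n : ℕ),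
    (l.foldl (fun p m => ((m + p.2) :: p.1, m + p.2 + 1)) (r, n)).1 = (raise' l n).reverse ++ r
  | [], _, _ => by simp [raise']
  | m :: l, r, n => by simp [raise', foldl_raise' l]

theorem foldl_lower' : ∀ (l r : List ℕ) (n : ℕ),
    (l.foldl (fun p m => ((m - p.2) :: p.1, m + 1)) (r, n)).1 = (lower' l n).reverse ++ r
  | [], _, _ => by simp [lower']
  | m :: l, r, n => by simp [lower', foldl_lower' l]

theorem primrec₂_raise' : Primrec₂ raise' := by
  have step : Primrec₂ fun (_ : List ℕ × ℕ) (q : (List ℕ × ℕ) × ℕ) =>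
      ((q.2 + q.1.2) :: q.1.1, q.2 + q.1.2 + 1) := by
    have hsum : Primrec₂ fun (_ : List ℕ × ℕ) (q : (List ℕ × ℕ) × ℕ) => q.2 + q.1.2 :=
      (Primrec.nat_add.comp (Primrec.snd.comp .snd) (Primrec.snd.comp (Primrec.fst.comp .snd)))
    exact (Primrec.pair (Primrec.list_cons.comp hsum (Primrec.fst.comp (Primrec.fst.comp .snd)))
      (Primrec.succ.comp hsum))
  have := Primrec.list_reverse.comp (Primrec.fst.comp
    (Primrec.list_foldl .fst (Primrec.pair (.const []) .snd) step))
  exact this.of_eq fun p => by simp [foldl_raise']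

theorem primrec₂_lower' : Primrec₂ lower' := by
  have step : Primrec₂ fun (_ : List ℕ × ℕ) (q : (List ℕ × ℕ) × ℕ) =>
      ((q.2 - q.1.2) :: q.1.1, q.2 + 1) :=
    Primrec.pair (Primrec.list_cons.comp
      (Primrec.nat_sub.comp (Primrec.snd.comp .snd) (Primrec.snd.comp (Primrec.fst.comp .snd)))
      (Primrec.fst.comp (Primrec.fst.comp .snd))) (Primrec.succ.comp (Primrec.snd.comp .snd))
  have := Primrec.list_reverse.comp (Primrec.fst.comp
    (Primrec.list_foldl .fst (Primrec.pair (.const []) .snd) step))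
  exact this.of_eq fun p => by simp [foldl_lower']

theorem ofNat_finset_nat (n : ℕ) : ofNat (Finset ℕ) n = raise'Finset (ofNat (List ℕ) n) 0 := by
  refine (ofNat_of_decode rfl).trans ?_
  ext x
  simp [raise'Finset, eqv]

theorem mem_raise'Finset {x n : ℕ} {l : List ℕ} : x ∈ raise'Finset l n ↔ x ∈ raise' l n :=
  Iff.rfl

theorem sort_raise'Finset (l : List ℕ) (n : ℕ) : (raise'Finset l n).sort = raise' l n :=
  (Finset.sortedLT_sort _).eq_of_mem_iff (raise'_sorted _ _) fun _ => by
    rw [Finset.mem_sort, mem_raise'Finset]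

end Denumerable

namespace Primrec

theorem list_sum : Primrec (List.sum : List ℕ → ℕ) :=
  (list_foldr .id (.const 0) (nat_add.comp (fst.comp snd) (snd.comp snd)).to₂).of_eq
    fun _ => rfl

theorem finset_sort : Primrec fun s : Finset ℕ => s.sort :=
  (primrec₂_raise'.comp (Primrec.ofNat (List ℕ)|>.comp .encode) (.const 0)).of_eq fun s => by
    conv_rhs => rw [← ofNat_encode s, ofNat_finset_nat, sort_raise'Finset _ 0]

theorem list_toFinset : Primrec (List.toFinset : List ℕ → Finset ℕ) := by
  let sortedDedup : List ℕ → List ℕ := fun l => (List.range (l.sum + 1)).filter (· ∈ l)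
  have hsorted (l : List ℕ) : (sortedDedup l).SortedLT :=
    (List.pairwise_lt_range.filter _).sortedLT
  have hmem (l : List ℕ) (x : ℕ) : x ∈ sortedDedup l ↔ x ∈ l := by
    simpa [sortedDedup] using fun h => Nat.lt_succ_of_le (List.le_sum_of_mem h)
  have hprim : Primrec sortedDedup := by
    have hrel : PrimrecRel fun (x : ℕ) (l : List ℕ) => x ∈ l :=
      ((PrimrecRel.exists_mem_list Primrec.eq).comp₂ Primrec₂.right Primrec₂.left).of_eq
        fun _ _ => by simp
    exact hrel.listFilter.comp (list_range.comp (succ.comp list_sum)) .id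
  refine ((Primrec.ofNat (Finset ℕ)).comp
    (Primrec.encode.comp (primrec₂_lower'.comp hprim (.const 0)))).of_eq fun l => ?_
  rw [ofNat_finset_nat, ofNat_encode]
  ext x
  rw [mem_raise'Finset, raise_lower' (fun _ _ => Nat.zero_le _) (hsorted l), hmem,
    List.mem_toFinset]

theorem finset_sum_id : Primrec fun s : Finset ℕ => ∑ x ∈ s, x :=
  (list_sum.comp finset_sort).of_eq fun s => by
    conv_rhs => rw [← Finset.sort_toFinset s (· ≤ ·)]
    rw [List.sum_toFinset _ (Finset.sort_nodup s _), List.map_id']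

end Primrec

/-- `encode` is that of `Finset.encodable` (the code of a sorted list), which differs from the
`Denumerable` numbering underlying `Primcodable (Finset ℕ)`. -/
theorem Finset.coe_ofNat_list_encode (s : Finset ℕ) :
    (ofNat (List ℕ) (encode s) : Multiset ℕ) = s.val := by
  have h : decodeMultiset (encode s.val) = some s.val := encodek s.val
  exact (by simpa [decodeMultiset] using h : (ofNat (List ℕ) (encode s.val) : Multiset ℕ) = _)

section

open Finset

def smallCodedUnion (u : Finset ℕ) (b : ℕ) : Finset ℕ :=
  (u.sort.flatMap fun c => if (ofNat (List ℕ) c).length ≤ b then ofNat (List ℕ) c else []).toFinset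

theorem primrec₂_smallCodedUnion : Primrec₂ smallCodedUnion :=
  Primrec.list_toFinset.comp <| Primrec.list_flatMap (Primrec.finset_sort.comp .fst) <|
    Primrec.ite (Primrec.nat_le.comp (Primrec.list_length.comp ((Primrec.ofNat _).comp .snd))
      (Primrec.snd.comp .fst)) ((Primrec.ofNat _).comp .snd) (.const [])

theorem mem_smallCodedUnion {u S : Finset ℕ} {b x : ℕ} (hS : encode S ∈ u) (hSb : #S ≤ b)
    (hx : x ∈ S) : x ∈ smallCodedUnion u b := by
  have hlen : (ofNat (List ℕ) (encode S)).length = #S := by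
    rw [card_def, ← coe_ofNat_list_encode, Multiset.coe_card]
  have hmem : x ∈ ofNat (List ℕ) (encode S) := by
    rw [← Multiset.mem_coe, coe_ofNat_list_encode]; exact hx
  rw [smallCodedUnion, List.mem_toFinset, List.mem_flatMap]
  exact ⟨encode S, (mem_sort _).2 hS, by rwa [if_pos (hlen.trans_le hSb)]⟩

theorem card_smallCodedUnion_le (u : Finset ℕ) (b : ℕ) : #(smallCodedUnion u b) ≤ #u * b := by
  refine (List.toFinset_card_le _).trans ?_
  rw [List.length_flatMap, ← length_sort (· ≤ ·), ← smul_eq_mul]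
  refine (List.sum_le_card_nsmul _ b fun n hn => ?_).trans_eq (by rw [List.length_map])
  obtain ⟨c, -, rfl⟩ := List.mem_map.1 hn
  split_ifs with h
  · exact h
  · exact Nat.zero_le _

end

theorem Computable.partialSups {d : ℕ → ℕ} (hd : Computable d) : Computable (partialSups d) := by
  have hstep : Computable₂ fun (_ : ℕ) (p : ℕ × ℕ) => max p.2 (d (p.1 + 1)) :=
    Primrec.nat_max.to_comp.comp (snd.comp snd) (hd.comp (succ.comp (fst.comp snd)))
  refine (Computable.nat_rec .id (hd.comp (.const 0)) hstep).of_eq fun k => ?_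
  induction k with
  | zero => rfl
  | succ k ih => simp only [id, partialSups_add_one, ← ih]

theorem IsBound.mul {h₁ h : ℕ → ℕ} (hb₁ : IsBound h₁) (hmono : Monotone h) (hpos : ∀ k, 1 ≤ h k) :
    IsBound fun k => h₁ k * h k := by
  refine ⟨fun a b hab => Nat.mul_le_mul (hb₁.1 hab) (hmono hab), fun n => ?_⟩
  obtain ⟨k, hk⟩ := hb₁.2 n
  exact ⟨k, hk.trans (Nat.le_mul_of_pos_right _ (hpos k))⟩

theorem hif_of_forall_computable_trace {A : ℕ → ℕ}
    (H : ∀ g : ℕ → ℕ, TuringLE g A → ∃ T : ℕ → Finset ℕ, Computable T ∧ Traces T g) : HIF A := by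
  intro g hg
  obtain ⟨T, hT, hgT⟩ := H g hg
  exact ⟨fun k => ∑ x ∈ T k, x, Primrec.finset_sum_id.to_comp.comp hT,
    fun k => Finset.single_le_sum (f := id) (fun _ _ => Nat.zero_le _) (hgT k)⟩

theorem exists_computable_trace_of_relative_trace {A B h₁ h₂ d : ℕ → ℕ}
    (H1 : ∀ g : ℕ → ℕ, TuringLE g A →
      ∃ T : ℕ → Finset ℕ, Computable T ∧ Traces T g ∧ BoundFor h₁ T)
    (H2 : ∀ g : ℕ → ℕ, TuringLE g B →
      ∃ T : ℕ → Finset ℕ, TraceRecIn ↑A T ∧ Traces T g ∧ BoundFor h₂ T)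
    (hd : Computable d) (hh₂d : ∀ n, h₂ n ≤ d n) (g : ℕ → ℕ) (hg : TuringLE g B) :
    ∃ T : ℕ → Finset ℕ, Computable T ∧ Traces T g ∧ BoundFor (fun k => h₁ k * d k) T := by
  obtain ⟨S, hSA, hgS, hSh₂⟩ := H2 g hg
  obtain ⟨U, hU, hSU, hUh₁⟩ := H1 (fun k => encode (S k)) hSA
  refine ⟨fun k => smallCodedUnion (U k) (d k), primrec₂_smallCodedUnion.to_comp.comp hU hd,
    fun k => mem_smallCodedUnion (hSU k) ((hSh₂ k).trans (hh₂d k)) (hgS k), fun k => ?_⟩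
  exact (card_smallCodedUnion_le _ _).trans (Nat.mul_le_mul_right _ (hUh₁ k))

/-- If every function computed by `A` has a computable trace bounded by a computable bound
`h₁`, every function computed by `B` has an `A`-computable trace bounded by a bound
`h₂ ≤_T A`, and every `A`-computable function is dominated by a computable function, then
there is a computable `h̃₂` dominating `h₂` such that every function computed by `B` has a
computable trace bounded by the pointwise product `h₁ · h̃₂`.  In particular, if `A` is
computably traceable and `B` is computably traceable relative to `A`, then `B` is
computably traceable. -/
theorem traceable_transitive :
    (∀ A B h₁ h₂ : ℕ → ℕ,
      Computable h₁ → IsBound h₁ →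
      (∀ g : ℕ → ℕ, TuringLE g A →
        ∃ T : ℕ → Finset ℕ, Computable T ∧ Traces T g ∧ BoundFor h₁ T) →
      TuringLE h₂ A → IsBound h₂ →
      (∀ g : ℕ → ℕ, TuringLE g B →
        ∃ T : ℕ → Finset ℕ, TraceRecIn ↑A T ∧ Traces T g ∧ BoundFor h₂ T) →
      (∀ g : ℕ → ℕ, TuringLE g A → ∃ g' : ℕ → ℕ, Computable g' ∧ ∀ n, g n ≤ g' n) →
      ∃ h₂' : ℕ → ℕ, Computable h₂' ∧ (∀ n, h₂ n ≤ h₂' n) ∧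
        ∀ g : ℕ → ℕ, TuringLE g B →
          ∃ T : ℕ → Finset ℕ, Computable T ∧ Traces T g ∧
            BoundFor (fun k => h₁ k * h₂' k) T) ∧
    (∀ A B : ℕ → ℕ, CompTraceable A → CompTraceableIn A B → CompTraceable B) := by
  refine ⟨fun A B h₁ h₂ _ _ H1 hh₂A _ H2 Hdom => ?_, ?_⟩
  · obtain ⟨d, hd, hh₂d⟩ := Hdom h₂ hh₂A
    exact ⟨d, hd, hh₂d, exists_computable_trace_of_relative_trace H1 H2 hd hh₂d⟩
  · rintro A B ⟨h₁, hh₁, hb₁, H1⟩ ⟨h₂, hh₂A, -, H2⟩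
    have hA : HIF A := hif_of_forall_computable_trace fun g hg =>
      (H1 g hg).imp fun _ hT => ⟨hT.1, hT.2.1⟩
    obtain ⟨d, hd, hh₂d⟩ := hA h₂ hh₂A
    -- A monotone, positive majorant of `d`, so that `h₁ * d'` is again a bound.
    let d' : ℕ → ℕ := fun k => partialSups d k + 1
    have hd' : Computable d' := Computable.succ.comp hd.partialSups
    have hh₂d' (n : ℕ) : h₂ n ≤ d' n :=
      (hh₂d n).trans ((le_partialSups d n).trans (Nat.le_succ _))
    refine ⟨fun k => h₁ k * d' k, Primrec.nat_mul.to_comp.comp hh₁ hd', ?_,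
      exists_computable_trace_of_relative_trace H1 H2 hd' hh₂d'⟩
    exact hb₁.mul (fun _ _ hab => Nat.succ_le_succ ((partialSups d).monotone hab))
      fun _ => Nat.succ_pos _
end

section
/- Every computably traceable function is hyperimmune-free, and conversely every function computed by a hyperimmune-free function has some computable trace (though not necessarily with a uniform computable bound). -/
/-! A computable trace `T` of `g` yields the computable dominating function `n ↦ code (T n)`,
since in the canonical coding of finite sets every element of the set with code `m` is below `m`.
Conversely a computable `g' ≥ g` yields the computable trace `n ↦ {0, …, g' n}`. -/

open Denumerable Encodable

theorem Primrec.list_replicate {α : Type*} [Primcodable α] :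
    Primrec₂ (List.replicate : ℕ → α → List α) :=
  (Primrec.list_map (Primrec.list_range.comp Primrec.fst)
    (Primrec.snd.comp Primrec.fst).to₂).of_eq fun p => by simp [List.map_const']

namespace Denumerable

theorem lt_add_encode_of_mem_raise' {x : ℕ} :
    ∀ {l : List ℕ} {n : ℕ}, x ∈ raise' l n → x < n + encode l
  | m :: l, n, hx => by
    have hpair := Nat.add_le_pair m (encode l)
    rcases List.mem_cons.mp hx with rfl | hx
    · simp only [encode_list_cons, encode_nat]
      omega
    · have := lt_add_encode_of_mem_raise' hx
      simp only [encode_list_cons, encode_nat]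
      omega

theorem mem_ofNat_finset {x n : ℕ} :
    x ∈ ofNat (Finset ℕ) n ↔ x ∈ raise' (ofNat (List ℕ) n) 0 := by
  show x ∈ Finset.map (eqv ℕ).symm.toEmbedding (raise'Finset _ 0) ↔ _
  simp [raise'Finset, eqv, Finset.mem_def]

theorem lt_of_mem_ofNat_finset {x n : ℕ} (hx : x ∈ ofNat (Finset ℕ) n) : x < n := by
  simpa using lt_add_encode_of_mem_raise' (mem_ofNat_finset.mp hx)

/-- `eqv (Finset ℕ)` rather than `encode`: on `Finset ℕ` the latter elaborates to
`Finset.encodable`, not to the coding that `Computable` refers to. -/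
theorem lt_eqv_finset_of_mem {x : ℕ} {s : Finset ℕ} (hx : x ∈ s) : x < eqv (Finset ℕ) s :=
  lt_of_mem_ofNat_finset <| by rwa [← (eqv (Finset ℕ)).symm_apply_apply s] at hx

theorem raise'_replicate_zero (k m : ℕ) : raise' (List.replicate k 0) m = List.range' m k := by
  induction k generalizing m with
  | zero => rfl
  | succ k ih => simp [List.replicate, raise', ih, List.range']

theorem ofNat_finset_encode_replicate_zero (k : ℕ) :
    ofNat (Finset ℕ) (encode (List.replicate k 0)) = Finset.range k := by
  ext x
  simp [mem_ofNat_finset, raise'_replicate_zero]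

end Denumerable

theorem Primrec.finset_range : Primrec Finset.range :=
  ((Primrec.ofNat (Finset ℕ)).comp (Primrec.encode.comp
    (Primrec.list_replicate.comp Primrec.id (Primrec.const 0)))).of_eq
    ofNat_finset_encode_replicate_zero

theorem exists_computable_ge_of_traces {T : ℕ → Finset ℕ} {g : ℕ → ℕ} (hT : Computable T)
    (hg : Traces T g) : ∃ g' : ℕ → ℕ, Computable g' ∧ ∀ n, g n ≤ g' n :=
  ⟨fun n => eqv (Finset ℕ) (T n), Computable.encode.comp hT, fun n =>
    (lt_eqv_finset_of_mem (hg n)).le⟩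

theorem exists_computable_traces_of_le {g g' : ℕ → ℕ} (hg' : Computable g')
    (hle : ∀ n, g n ≤ g' n) : ∃ T : ℕ → Finset ℕ, Computable T ∧ Traces T g :=
  ⟨fun n => Finset.range (g' n + 1), Primrec.finset_range.to_comp.comp (Computable.succ.comp hg'),
    fun n => Finset.mem_range_succ_iff.mpr (hle n)⟩

/-- Every computably traceable function is hyperimmune-free, and every function computed
by a hyperimmune-free function has some computable trace (not necessarily with a uniform
computable bound). -/
theorem traceable_and_hif :
    (∀ f : ℕ → ℕ, CompTraceable f → HIF f) ∧
    (∀ f : ℕ → ℕ, HIF f → ∀ g : ℕ → ℕ, TuringLE g f →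
      ∃ T : ℕ → Finset ℕ, Computable T ∧ Traces T g) := by
  refine ⟨fun f ⟨_, _, _, htrace⟩ g hg => ?_, fun f hf g hg => ?_⟩
  · obtain ⟨T, hT, hgT, -⟩ := htrace g hg
    exact exists_computable_ge_of_traces hT hgT
  · obtain ⟨g', hg', hle⟩ := hf g hg
    exact exists_computable_traces_of_le hg' hle
end
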